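/- Let (X_ν)_{ν∈ℕ} and X₀ be nonempty closed L-pseudo-Lipschitz subsets of the pseudo-Euclidean space ℝ_{(l,p)} with L < 1, and assume X_ν converges to X₀ in the sense of Kuratowski. Write ρ_ν(x) := ρ(x,X_ν), ρ₀(x) := ρ(x,X₀), m_ν(x) := m(x,X_ν), m₀(x) := m(x,X₀). Then for every a ∈ ℝ^n: (i) for every sequence x_ν → a one has ρ_ν(x_ν) → ρ₀(a); (ii) if y_ν ∈ m_ν(a) and y_ν → y along a subsequence, then y ∈ m₀(a). -/

import Mathlib

/-!
For `0 ≤ L < 1` every `L`-pseudo-Lipschitz set satisfies `Q(x - y) ≥ c ‖x - y‖²` with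
`c = (1 - L²)/(1 + L²) > 0`, a constant not depending on the set. Writing
`x - w = (x - b) + (b - w)` with `b` in the set, `Q(· - w)` is then coercive on every `X_ν`,
uniformly for `w` and `b` in a bounded region. Hence near-minimisers for `ρ_ν(x_ν)` stay bounded;
by Bolzano–Weierstrass and Kuratowski (b) a subsequence converges to a point of `X₀`, which gives
`liminf ρ_ν(x_ν) ≥ ρ₀(a)`. Approximating a near-minimiser for `ρ₀(a)` by Kuratowski (a) gives
`limsup ρ_ν(x_ν) ≤ ρ₀(a)`, and the same approximation passes `Q(y_ν - a) ≤ Q(b_ν - a)` to the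
limit for closest points.
-/

open Filter Topology Set

noncomputable section

/-- The pseudo-Euclidean space `ℝ_{(l,p)}`: `ℝ^(l+p)` with the Euclidean topology. -/
abbrev PE (l p : ℕ) := EuclideanSpace ℝ (Fin (l + p))

/-- The quadratic form `Q(x) = ‖x‖_l² − ‖x‖_p²`. -/
def Q (l p : ℕ) (x : PE l p) : ℝ :=
  ∑ i : Fin (l + p), if (i : ℕ) < l then (x i) ^ 2 else -((x i) ^ 2)

/-- The pseudo-scalar product `⟪x,y⟫ = Σ_{i<l} x_i y_i − Σ_{i≥l} x_i y_i`. -/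
def pseudoInner (l p : ℕ) (x y : PE l p) : ℝ :=
  ∑ i : Fin (l + p), if (i : ℕ) < l then x i * y i else -(x i * y i)

/-- `‖x‖_l`: the Euclidean norm of the first `l` coordinates. -/
def normL (l p : ℕ) (x : PE l p) : ℝ :=
  Real.sqrt (∑ i : Fin (l + p), if (i : ℕ) < l then (x i) ^ 2 else 0)

/-- `‖x‖_p`: the Euclidean norm of the last `p` coordinates. -/
def normP (l p : ℕ) (x : PE l p) : ℝ :=
  Real.sqrt (∑ i : Fin (l + p), if (i : ℕ) < l then 0 else (x i) ^ 2)

/-- `X` is acausal: `Q(x−y) > 0` for all distinct `x, y ∈ X`. -/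
def Acausal (l p : ℕ) (X : Set (PE l p)) : Prop :=
  ∀ x ∈ X, ∀ y ∈ X, x ≠ y → 0 < Q l p (x - y)

/-- `X` is `L`-pseudo-Lipschitz: `L‖x−y‖_l ≥ ‖x−y‖_p` for all `x, y ∈ X`. -/
def PseudoLipschitz (l p : ℕ) (L : ℝ) (X : Set (PE l p)) : Prop :=
  ∀ x ∈ X, ∀ y ∈ X, normP l p (x - y) ≤ L * normL l p (x - y)

/-- The squared-distance function `ρ(a,X) = inf {Q(x−a) : x ∈ X}`. -/
def rho (l p : ℕ) (X : Set (PE l p)) (a : PE l p) : ℝ :=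
  sInf ((fun x => Q l p (x - a)) '' X)

/-- The set of closest points `m(a) = {x ∈ X : Q(x−a) = ρ(a,X)}`, via its equivalent
description `m(a) = {x ∈ X : ∀ b ∈ X, Q(x−a) ≤ Q(b−a)}`. -/
def mm (l p : ℕ) (X : Set (PE l p)) (a : PE l p) : Set (PE l p) :=
  {x ∈ X | ∀ b ∈ X, Q l p (x - a) ≤ Q l p (b - a)}

/-- The medial axis `M_X`: points with at least two closest points in `X`. -/
def medialAxis (l p : ℕ) (X : Set (PE l p)) : Set (PE l p) :=
  {a | (mm l p X a).Nontrivial}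

/-- The vacant axis `W_X`: points with no closest point in `X`. -/
def vacantAxis (l p : ℕ) (X : Set (PE l p)) : Set (PE l p) :=
  {a | mm l p X a = ∅}

/-- The normal set `N(a) = {x : a ∈ m(x)}`. -/
def NN (l p : ℕ) (X : Set (PE l p)) (a : PE l p) : Set (PE l p) :=
  {x | a ∈ mm l p X x}

/-- The strict normal set `N'(a) = {x : m(x) = {a}}`. -/
def NN' (l p : ℕ) (X : Set (PE l p)) (a : PE l p) : Set (PE l p) :=
  {x | mm l p X x = {a}}

/-- Kuratowski convergence of a sequence of closed sets: (a) every `x ∈ X₀` is a limit of a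
sequence `x_ν ∈ X_ν`; (b) every convergent subsequence of points `x_{ν_j} ∈ X_{ν_j}` has its
limit in `X₀`. -/
def KuratowskiTendsto (l p : ℕ) (Xs : ℕ → Set (PE l p)) (X₀ : Set (PE l p)) : Prop :=
  (∀ x ∈ X₀, ∃ xs : ℕ → PE l p, (∀ ν, xs ν ∈ Xs ν) ∧ Tendsto xs atTop (𝓝 x)) ∧
  (∀ φ : ℕ → ℕ, StrictMono φ → ∀ xs : ℕ → PE l p, (∀ j, xs j ∈ Xs (φ j)) →
    ∀ x : PE l p, Tendsto xs atTop (𝓝 x) → x ∈ X₀)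

section QuadraticForm

variable {l p : ℕ}

lemma normL_sq (x : PE l p) :
    normL l p x ^ 2 = ∑ i : Fin (l + p), if (i : ℕ) < l then (x i) ^ 2 else 0 :=
  Real.sq_sqrt <| Finset.sum_nonneg fun i _ => by split_ifs <;> positivity

lemma normP_sq (x : PE l p) :
    normP l p x ^ 2 = ∑ i : Fin (l + p), if (i : ℕ) < l then 0 else (x i) ^ 2 :=
  Real.sq_sqrt <| Finset.sum_nonneg fun i _ => by split_ifs <;> positivity

lemma Q_eq_normL_sq_sub_normP_sq (x : PE l p) :
    Q l p x = normL l p x ^ 2 - normP l p x ^ 2 := by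
  rw [normL_sq, normP_sq, Q, ← Finset.sum_sub_distrib]
  refine Finset.sum_congr rfl fun i _ => ?_
  split_ifs <;> ring

lemma norm_sq_eq_normL_sq_add_normP_sq (x : PE l p) :
    ‖x‖ ^ 2 = normL l p x ^ 2 + normP l p x ^ 2 := by
  rw [EuclideanSpace.norm_sq_eq, normL_sq, normP_sq, ← Finset.sum_add_distrib]
  refine Finset.sum_congr rfl fun i _ => ?_
  split_ifs <;> simp

lemma neg_norm_sq_le_Q (x : PE l p) : -‖x‖ ^ 2 ≤ Q l p x := by
  rw [Q_eq_normL_sq_sub_normP_sq, norm_sq_eq_normL_sq_add_normP_sq]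
  nlinarith [sq_nonneg (normL l p x)]

lemma continuous_Q : Continuous (Q l p) :=
  continuous_finsetSum _ fun i _ => by
    have hi : Continuous fun x : PE l p => x i := (EuclideanSpace.proj i).continuous
    split_ifs
    exacts [hi.pow 2, (hi.pow 2).neg]

lemma Q_add (u v : PE l p) :
    Q l p (u + v) = Q l p u + 2 * pseudoInner l p u v + Q l p v := by
  simp only [Q, pseudoInner, Finset.mul_sum, ← Finset.sum_add_distrib]
  refine Finset.sum_congr rfl fun i _ => ?_
  simp only [PiLp.add_apply]
  split_ifs <;> ring

lemma abs_pseudoInner_le (u v : PE l p) : |pseudoInner l p u v| ≤ ‖u‖ * ‖v‖ := by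
  -- `⟪u, v⟫` is the Euclidean inner product of `v` with the reflection of `u` in `ℝ^l`.
  set Ju : PE l p := WithLp.toLp 2 fun i => if (i : ℕ) < l then u i else -u i
  have hinner : pseudoInner l p u v = inner ℝ v Ju := by
    simp only [pseudoInner, PiLp.inner_apply, RCLike.inner_apply, conj_trivial, Ju]
    refine Finset.sum_congr rfl fun i _ => ?_
    split_ifs <;> ring
  have hnorm : ‖Ju‖ = ‖u‖ := by
    simp only [EuclideanSpace.norm_eq, Ju]
    congr 1
    refine Finset.sum_congr rfl fun i _ => ?_
    split_ifs <;> simp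
  rw [hinner, ← hnorm, mul_comm]
  exact abs_real_inner_le_norm v Ju

lemma Q_sub_two_mul_norm_mul_norm_sub_sq_le (u v : PE l p) :
    Q l p u - 2 * (‖u‖ * ‖v‖) - ‖v‖ ^ 2 ≤ Q l p (u + v) := by
  rw [Q_add]
  linarith [neg_abs_le (pseudoInner l p u v), abs_pseudoInner_le u v, neg_norm_sq_le_Q v]

lemma tendsto_Q_sub {α : Type*} {F : Filter α} {f g : α → PE l p} {x y : PE l p}
    (hf : Tendsto f F (𝓝 x)) (hg : Tendsto g F (𝓝 y)) :
    Tendsto (fun i => Q l p (f i - g i)) F (𝓝 (Q l p (x - y))) :=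
  (continuous_Q.tendsto _).comp (hf.sub hg)

end QuadraticForm

def UniformlyAcausal (l p : ℕ) (c : ℝ) (X : Set (PE l p)) : Prop :=
  ∀ x ∈ X, ∀ y ∈ X, c * ‖x - y‖ ^ 2 ≤ Q l p (x - y)

section PseudoLipschitz

variable {l p : ℕ} {L L' : ℝ} {X : Set (PE l p)}

lemma PseudoLipschitz.mono (hX : PseudoLipschitz l p L X) (hLL' : L ≤ L') :
    PseudoLipschitz l p L' X := fun x hx y hy =>
  (hX x hx y hy).trans (mul_le_mul_of_nonneg_right hLL' (Real.sqrt_nonneg _))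

lemma PseudoLipschitz.uniformlyAcausal (hX : PseudoLipschitz l p L X) :
    UniformlyAcausal l p ((1 - L ^ 2) / (1 + L ^ 2)) X := by
  intro x hx y hy
  have hP := hX x hx y hy
  have hP0 : 0 ≤ normP l p (x - y) := Real.sqrt_nonneg _
  rw [Q_eq_normL_sq_sub_normP_sq, norm_sq_eq_normL_sq_add_normP_sq, div_mul_eq_mul_div,
    div_le_iff₀ (by positivity)]
  nlinarith [mul_self_le_mul_self hP0 hP]

lemma exists_pos_forall_uniformlyAcausal_of_pseudoLipschitz (hL : L < 1) :
    ∃ c > 0, ∀ X : Set (PE l p), PseudoLipschitz l p L X → UniformlyAcausal l p c X := by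
  set K := max L 0
  have hK : K ^ 2 < 1 := by
    have : K < 1 := max_lt hL one_pos
    nlinarith [le_max_right L 0]
  exact ⟨(1 - K ^ 2) / (1 + K ^ 2), div_pos (by linarith) (by positivity),
    fun X hX => (hX.mono (le_max_left L 0)).uniformlyAcausal⟩

end PseudoLipschitz

lemma le_one_add_div_of_mul_sq_sub_le {c t s M : ℝ} (hc : 0 < c) (hs : 0 ≤ s)
    (h : c * t ^ 2 - 2 * (t * s) - s ^ 2 ≤ M) : t ≤ 1 + (|M| + s ^ 2 + 2 * s) / c := by
  have hdiv : 0 ≤ (|M| + s ^ 2 + 2 * s) / c := by positivity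
  rcases le_or_gt t 1 with ht1 | ht1
  · linarith
  · -- for `t > 1` the constant terms are dominated by multiples of `t`
    have hct : c * t ≤ |M| + s ^ 2 + 2 * s := by
      nlinarith [le_abs_self M, abs_nonneg M, sq_nonneg s]
    have : t ≤ (|M| + s ^ 2 + 2 * s) / c := by rw [le_div_iff₀ hc]; linarith
    linarith

lemma exists_Q_sub_lt_of_rho_lt {l p : ℕ} {X : Set (PE l p)} {a : PE l p} {r : ℝ}
    (hX : X.Nonempty) (h : rho l p X a < r) : ∃ x ∈ X, Q l p (x - a) < r := by
  obtain ⟨_, ⟨x, hx, rfl⟩, hlt⟩ := exists_lt_of_csInf_lt (hX.image _) h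
  exact ⟨x, hx, hlt⟩

namespace UniformlyAcausal

variable {l p : ℕ} {c : ℝ} {X : Set (PE l p)}

lemma Q_sub_ge (hX : UniformlyAcausal l p c X) {x b : PE l p} (hx : x ∈ X) (hb : b ∈ X)
    (w : PE l p) :
    c * ‖x - b‖ ^ 2 - 2 * (‖x - b‖ * ‖b - w‖) - ‖b - w‖ ^ 2 ≤ Q l p (x - w) := by
  have hsplit := Q_sub_two_mul_norm_mul_norm_sub_sq_le (x - b) (b - w)
  rw [sub_add_sub_cancel] at hsplit
  linarith [hX x hx b hb]

lemma bddBelow_image_Q_sub (hc : 0 < c) (hX : UniformlyAcausal l p c X) {b : PE l p}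
    (hb : b ∈ X) (w : PE l p) : BddBelow ((fun x => Q l p (x - w)) '' X) := by
  refine ⟨-(‖b - w‖ ^ 2 / c) - ‖b - w‖ ^ 2, ?_⟩
  rintro _ ⟨x, hx, rfl⟩
  have hsq : -(‖b - w‖ ^ 2 / c) ≤ c * ‖x - b‖ ^ 2 - 2 * (‖x - b‖ * ‖b - w‖) := by
    rw [neg_le, neg_sub, le_div_iff₀ hc]
    nlinarith [sq_nonneg (c * ‖x - b‖ - ‖b - w‖)]
  linarith [hX.Q_sub_ge hx hb w]

lemma rho_le_Q_sub (hc : 0 < c) (hX : UniformlyAcausal l p c X) {x : PE l p} (hx : x ∈ X)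
    (a : PE l p) : rho l p X a ≤ Q l p (x - a) :=
  csInf_le (hX.bddBelow_image_Q_sub hc hx a) ⟨x, hx, rfl⟩

lemma norm_sub_le_of_Q_sub_le (hc : 0 < c) (hX : UniformlyAcausal l p c X) {x b w : PE l p}
    (hx : x ∈ X) (hb : b ∈ X) {S M : ℝ} (hS : ‖b - w‖ ≤ S) (hM : Q l p (x - w) ≤ M) :
    ‖x - b‖ ≤ 1 + (|M| + S ^ 2 + 2 * S) / c := by
  have hs := norm_nonneg (b - w)
  calc ‖x - b‖ ≤ 1 + (|M| + ‖b - w‖ ^ 2 + 2 * ‖b - w‖) / c :=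
        le_one_add_div_of_mul_sq_sub_le hc hs ((hX.Q_sub_ge hx hb w).trans hM)
    _ ≤ 1 + (|M| + S ^ 2 + 2 * S) / c := by gcongr

end UniformlyAcausal

lemma isBounded_range_of_Q_sub_le {l p : ℕ} {c M : ℝ} (hc : 0 < c) {Y : ℕ → Set (PE l p)}
    (hY : ∀ j, UniformlyAcausal l p c (Y j)) {z b w : ℕ → PE l p}
    (hz : ∀ j, z j ∈ Y j) (hb : ∀ j, b j ∈ Y j)
    (hb_bdd : Bornology.IsBounded (range b)) (hw_bdd : Bornology.IsBounded (range w))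
    (hM : ∀ j, Q l p (z j - w j) ≤ M) : Bornology.IsBounded (range z) := by
  obtain ⟨B, hB⟩ := isBounded_iff_forall_norm_le.1 hb_bdd
  obtain ⟨W, hW⟩ := isBounded_iff_forall_norm_le.1 hw_bdd
  refine isBounded_iff_forall_norm_le.2 ⟨1 + (|M| + (B + W) ^ 2 + 2 * (B + W)) / c + B, ?_⟩
  rintro _ ⟨j, rfl⟩
  have hbw : ‖b j - w j‖ ≤ B + W :=
    (norm_sub_le _ _).trans (add_le_add (hB _ ⟨j, rfl⟩) (hW _ ⟨j, rfl⟩))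
  calc ‖z j‖ ≤ ‖z j - b j‖ + ‖b j‖ := norm_le_norm_sub_add _ _
    _ ≤ _ := add_le_add ((hY j).norm_sub_le_of_Q_sub_le hc (hz j) (hb j) hbw (hM j))
        (hB _ ⟨j, rfl⟩)

namespace KuratowskiTendsto

variable {l p : ℕ} {Xs : ℕ → Set (PE l p)} {X₀ : Set (PE l p)} {c : ℝ}

lemma nonempty (hK : KuratowskiTendsto l p Xs X₀) (hne₀ : X₀.Nonempty) (ν : ℕ) :
    (Xs ν).Nonempty :=
  let ⟨_, hx⟩ := hne₀
  let ⟨xs, hxs, _⟩ := hK.1 _ hx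
  ⟨xs ν, hxs ν⟩

lemma eventually_rho_lt (hK : KuratowskiTendsto l p Xs X₀) (hc : 0 < c)
    (hXs : ∀ ν, UniformlyAcausal l p c (Xs ν)) (hne₀ : X₀.Nonempty) {xs : ℕ → PE l p}
    {a : PE l p} (hxs : Tendsto xs atTop (𝓝 a)) {r : ℝ} (hr : rho l p X₀ a < r) :
    ∀ᶠ ν in atTop, rho l p (Xs ν) (xs ν) < r := by
  obtain ⟨b, hb, hbr⟩ := exists_Q_sub_lt_of_rho_lt hne₀ hr
  obtain ⟨bs, hbs, hbs_tendsto⟩ := hK.1 b hb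
  filter_upwards [(tendsto_Q_sub hbs_tendsto hxs).eventually (gt_mem_nhds hbr)] with ν hν
  exact ((hXs ν).rho_le_Q_sub hc (hbs ν) _).trans_lt hν

lemma exists_subseq_tendsto_of_Q_sub_le (hK : KuratowskiTendsto l p Xs X₀) (hc : 0 < c)
    (hXs : ∀ ν, UniformlyAcausal l p c (Xs ν)) (hne₀ : X₀.Nonempty) {φ : ℕ → ℕ}
    (hφ : StrictMono φ) {z w : ℕ → PE l p} (hz : ∀ j, z j ∈ Xs (φ j))
    (hw : Bornology.IsBounded (range w)) {M : ℝ} (hM : ∀ j, Q l p (z j - w j) ≤ M) :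
    ∃ y ∈ X₀, ∃ ψ : ℕ → ℕ, StrictMono ψ ∧ Tendsto (z ∘ ψ) atTop (𝓝 y) := by
  obtain ⟨b₀, hb₀⟩ := hne₀
  obtain ⟨bs, hbs, hbs_tendsto⟩ := hK.1 b₀ hb₀
  have hz_bdd : Bornology.IsBounded (range z) :=
    isBounded_range_of_Q_sub_le hc (fun j => hXs (φ j)) hz (fun j => hbs (φ j))
      (Metric.isBounded_range_of_tendsto _ (hbs_tendsto.comp hφ.tendsto_atTop)) hw hM
  obtain ⟨y, -, ψ, hψ, hzy⟩ := tendsto_subseq_of_bounded hz_bdd (mem_range_self (f := z))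
  exact ⟨y, hK.2 (φ ∘ ψ) (hφ.comp hψ) (z ∘ ψ) (fun j => hz (ψ j)) y hzy, ψ, hψ, hzy⟩

lemma eventually_lt_rho (hK : KuratowskiTendsto l p Xs X₀) (hc : 0 < c)
    (hXs : ∀ ν, UniformlyAcausal l p c (Xs ν)) (hX₀ : UniformlyAcausal l p c X₀)
    (hne₀ : X₀.Nonempty) {xs : ℕ → PE l p} {a : PE l p} (hxs : Tendsto xs atTop (𝓝 a))
    {r : ℝ} (hr : r < rho l p X₀ a) :
    ∀ᶠ ν in atTop, r < rho l p (Xs ν) (xs ν) := by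
  by_contra hfreq
  simp only [not_eventually, not_lt] at hfreq
  obtain ⟨φ, hφ, hφr⟩ := extraction_of_frequently_atTop hfreq
  obtain ⟨r', hrr', hr'⟩ := exists_between hr
  have hnear : ∀ j, ∃ z ∈ Xs (φ j), Q l p (z - xs (φ j)) < r' := fun j =>
    exists_Q_sub_lt_of_rho_lt (hK.nonempty hne₀ _) ((hφr j).trans_lt hrr')
  choose z hz hzr using hnear
  obtain ⟨y, hy, ψ, hψ, hzy⟩ := hK.exists_subseq_tendsto_of_Q_sub_le hc hXs hne₀ hφ hz
    (Metric.isBounded_range_of_tendsto _ (hxs.comp hφ.tendsto_atTop)) fun j => (hzr j).le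
  have hQy : Q l p (y - a) ≤ r' :=
    le_of_tendsto (tendsto_Q_sub hzy (hxs.comp (hφ.comp hψ).tendsto_atTop))
      (Eventually.of_forall fun j => (hzr (ψ j)).le)
  linarith [hX₀.rho_le_Q_sub hc hy a]

lemma tendsto_rho (hK : KuratowskiTendsto l p Xs X₀) (hc : 0 < c)
    (hXs : ∀ ν, UniformlyAcausal l p c (Xs ν)) (hX₀ : UniformlyAcausal l p c X₀)
    (hne₀ : X₀.Nonempty) {xs : ℕ → PE l p} {a : PE l p} (hxs : Tendsto xs atTop (𝓝 a)) :
    Tendsto (fun ν => rho l p (Xs ν) (xs ν)) atTop (𝓝 (rho l p X₀ a)) :=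
  tendsto_order.2 ⟨fun _ hr => hK.eventually_lt_rho hc hXs hX₀ hne₀ hxs hr,
    fun _ hr => hK.eventually_rho_lt hc hXs hne₀ hxs hr⟩

lemma mem_mm_of_tendsto (hK : KuratowskiTendsto l p Xs X₀) {a : PE l p} {φ : ℕ → ℕ}
    (hφ : StrictMono φ) {ys : ℕ → PE l p} (hys : ∀ j, ys j ∈ mm l p (Xs (φ j)) a)
    {y : PE l p} (hy : Tendsto ys atTop (𝓝 y)) : y ∈ mm l p X₀ a := by
  refine ⟨hK.2 φ hφ ys (fun j => (hys j).1) y hy, fun b hb => ?_⟩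
  obtain ⟨bs, hbs, hbs_tendsto⟩ := hK.1 b hb
  exact le_of_tendsto_of_tendsto' (tendsto_Q_sub hy tendsto_const_nhds)
    (tendsto_Q_sub (hbs_tendsto.comp hφ.tendsto_atTop) tendsto_const_nhds)
    fun j => (hys j).2 _ (hbs (φ j))

end KuratowskiTendsto

theorem rho_m_kuratowski_limit_general (l p : ℕ) (L : ℝ) (hL : L < 1)
    (Xs : ℕ → Set (PE l p)) (X₀ : Set (PE l p))
    (hne₀ : X₀.Nonempty)
    (hlip : ∀ ν, PseudoLipschitz l p L (Xs ν)) (hlip₀ : PseudoLipschitz l p L X₀)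
    (hK : KuratowskiTendsto l p Xs X₀) (a : PE l p) :
    (∀ xs : ℕ → PE l p, Tendsto xs atTop (𝓝 a) →
      Tendsto (fun ν => rho l p (Xs ν) (xs ν)) atTop (𝓝 (rho l p X₀ a))) ∧
    (∀ φ : ℕ → ℕ, StrictMono φ → ∀ ys : ℕ → PE l p, (∀ j, ys j ∈ mm l p (Xs (φ j)) a) →
      ∀ y : PE l p, Tendsto ys atTop (𝓝 y) → y ∈ mm l p X₀ a) := by
  obtain ⟨c, hc, hacausal⟩ :=
    exists_pos_forall_uniformlyAcausal_of_pseudoLipschitz (l := l) (p := p) hL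
  exact ⟨fun _ hxs => hK.tendsto_rho hc (fun ν => hacausal _ (hlip ν)) (hacausal _ hlip₀) hne₀ hxs,
    fun _ hφ _ hys _ hy => hK.mem_mm_of_tendsto hφ hys hy⟩

/-- For nonempty closed `L`-pseudo-Lipschitz sets `X_ν → X₀` (Kuratowski,
`L < 1`) and any `a`: (i) `ρ_ν(x_ν) → ρ₀(a)` whenever `x_ν → a`; (ii) any limit of a
convergent subsequence of points `y_ν ∈ m_ν(a)` belongs to `m₀(a)`. -/
theorem rho_m_kuratowski_limit (l p : ℕ) (hl : 1 ≤ l) (L : ℝ) (hL : L < 1)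
    (Xs : ℕ → Set (PE l p)) (X₀ : Set (PE l p))
    (hne : ∀ ν, (Xs ν).Nonempty) (hne₀ : X₀.Nonempty)
    (hcl : ∀ ν, IsClosed (Xs ν)) (hcl₀ : IsClosed X₀)
    (hlip : ∀ ν, PseudoLipschitz l p L (Xs ν)) (hlip₀ : PseudoLipschitz l p L X₀)
    (hK : KuratowskiTendsto l p Xs X₀) (a : PE l p) :
    (∀ xs : ℕ → PE l p, Tendsto xs atTop (𝓝 a) →
      Tendsto (fun ν => rho l p (Xs ν) (xs ν)) atTop (𝓝 (rho l p X₀ a))) ∧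
    (∀ φ : ℕ → ℕ, StrictMono φ → ∀ ys : ℕ → PE l p, (∀ j, ys j ∈ mm l p (Xs (φ j)) a) →
      ∀ y : PE l p, Tendsto ys atTop (𝓝 y) → y ∈ mm l p X₀ a) :=
  rho_m_kuratowski_limit_general l p L hL Xs X₀ hne₀ hlip hlip₀ hK a
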